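/- Let x0 ∈ [-1,1] and y0 > 0, and set c = ((x0+1)/2, y0/2). Suppose there exists a continuous function v : ℝ × [0,y0] → ℝ which is differentiable on (ℝ × (0,y0)) \ {c} with ‖∇v(p)‖ < 1 at every such point, and which satisfies v(0,0) = 0 and v(c) = 1. Then (x0+1)² + y0² > 4 (equivalently, the distance from c to the origin (0,0) is strictly greater than 1). -/

import Mathlib

/-! Along the segment from the origin to `c` the function `v` rises by `1`, while its slope in
the direction of the segment is less than `1`; by the mean value theorem the segment is longer
than `1`, and `4 ‖c‖² = (x0 + 1)² + y0²`. -/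

noncomputable section

open Filter

/-- The Euclidean plane. -/
abbrev E2 := EuclideanSpace ℝ (Fin 2)

/-- The point `(x, y)` of the Euclidean plane. -/
def pt (x y : ℝ) : E2 := WithLp.toLp 2 ![x, y]

/-- Partial derivative of `f` at `p` in the `i`-th coordinate direction. -/
def pd (i : Fin 2) (f : E2 → ℝ) (p : E2) : ℝ :=
  fderiv ℝ f p (EuclideanSpace.single i 1)

/-- `v` is a solution of the maximal surface equation on the open set `U`:
`v` is `C²` on `U`, `‖∇v‖ < 1` on `U`, and the expanded form of
`div (∇v / √(1 - ‖∇v‖²)) = 0` holds on `U`. -/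
def IsMaxSurfaceSol (U : Set E2) (v : E2 → ℝ) : Prop :=
  ContDiffOn ℝ 2 v U ∧
  (∀ p ∈ U, ‖gradient v p‖ < 1) ∧
  (∀ p ∈ U,
    (1 - (pd 1 v p) ^ 2) * pd 0 (pd 0 v) p
      + 2 * pd 0 v p * pd 1 v p * pd 1 (pd 0 v) p
      + (1 - (pd 0 v p) ^ 2) * pd 1 (pd 1 v) p = 0)

/-- The open strip `ℝ × (0, y0)`. -/
def strip (y0 : ℝ) : Set E2 := {p | 0 < p 1 ∧ p 1 < y0}

/-- The closed strip `ℝ × [0, y0]`. -/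
def stripCl (y0 : ℝ) : Set E2 := {p | 0 ≤ p 1 ∧ p 1 ≤ y0}

/-- The distance from a real number `t` to the set `2ℤ` of even integers. -/
def dist2Z (t : ℝ) : ℝ := Metric.infDist t {x : ℝ | ∃ n : ℤ, x = 2 * n}

/-- The puncture point `c = ((x0+1)/2, y0/2)`. -/
def ptC (x0 y0 : ℝ) : E2 := pt ((x0 + 1) / 2) (y0 / 2)

/-- The punctured Dirichlet problem `D*(x0, y0)`: `v` is continuous on the closed
strip `ℝ × [0, y0]`, solves the maximal surface equation on the punctured open strip
`(ℝ × (0, y0)) \ {c}`, has boundary values `v(x,0) = dist(x, 2ℤ)`,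
`v(x,y0) = dist(x - x0 + 1, 2ℤ)`, and `v(c) = 1`. -/
def DirichletStar (x0 y0 : ℝ) (v : E2 → ℝ) : Prop :=
  ContinuousOn v (stripCl y0) ∧
  IsMaxSurfaceSol (strip y0 \ {ptC x0 y0}) v ∧
  (∀ x : ℝ, v (pt x 0) = dist2Z x) ∧
  (∀ x : ℝ, v (pt x y0) = dist2Z (x - x0 + 1)) ∧
  v (ptC x0 y0) = 1

section MeanValue

variable {E : Type*} [NormedAddCommGroup E] [NormedSpace ℝ E]

theorem sub_lt_mul_norm_of_norm_fderiv_lt {f : E → ℝ} {a b : E} {C : ℝ} (hab : a ≠ b)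
    (hcont : ContinuousOn f (segment ℝ a b))
    (hdiff : ∀ p ∈ openSegment ℝ a b, DifferentiableAt ℝ f p)
    (hbound : ∀ p ∈ openSegment ℝ a b, ‖fderiv ℝ f p‖ < C) :
    f b - f a < C * ‖b - a‖ := by
  set g : ℝ → ℝ := f ∘ AffineMap.lineMap a b
  have hg_cont : ContinuousOn g (Set.Icc 0 1) :=
    hcont.comp AffineMap.lineMap_continuous.continuousOn fun t ht =>
      segment_eq_image_lineMap ℝ a b ▸ Set.mem_image_of_mem _ ht
  have hmem : ∀ t ∈ Set.Ioo (0 : ℝ) 1, AffineMap.lineMap a b t ∈ openSegment ℝ a b :=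
    fun t ht => openSegment_eq_image_lineMap ℝ a b ▸ Set.mem_image_of_mem _ ht
  have hg_deriv : ∀ t ∈ Set.Ioo (0 : ℝ) 1,
      HasDerivAt g (fderiv ℝ f (AffineMap.lineMap a b t) (b - a)) t := fun t ht =>
    (hdiff _ (hmem t ht)).hasFDerivAt.comp_hasDerivAt t AffineMap.hasDerivAt_lineMap
  obtain ⟨ξ, hξ, hslope⟩ := exists_hasDerivAt_eq_slope g _ zero_lt_one hg_cont hg_deriv
  have hsub : f b - f a = fderiv ℝ f (AffineMap.lineMap a b ξ) (b - a) := by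
    simpa [g] using hslope.symm
  calc f b - f a ≤ ‖fderiv ℝ f (AffineMap.lineMap a b ξ)‖ * ‖b - a‖ :=
        hsub ▸ (le_abs_self _).trans ((fderiv ℝ f _).le_opNorm _)
    _ < C * ‖b - a‖ :=
        mul_lt_mul_of_pos_right (hbound _ (hmem ξ hξ)) (norm_pos_iff.2 (sub_ne_zero.2 hab.symm))

end MeanValue

theorem norm_gradient_eq_norm_fderiv {F : Type*} [NormedAddCommGroup F] [InnerProductSpace ℝ F]
    [CompleteSpace F] (f : F → ℝ) (x : F) : ‖gradient f x‖ = ‖fderiv ℝ f x‖ :=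
  (InnerProductSpace.toDual ℝ F).symm.norm_map _

theorem pt_zero_zero : pt 0 0 = 0 := by
  ext i; fin_cases i <;> simp [pt]

theorem norm_pt_sq (x y : ℝ) : ‖pt x y‖ ^ 2 = x ^ 2 + y ^ 2 := by
  simp [pt, EuclideanSpace.norm_sq_eq, Fin.sum_univ_two]

theorem ptC_apply_one (x0 y0 : ℝ) : ptC x0 y0 1 = y0 / 2 := by
  simp [ptC, pt]

theorem segment_zero_ptC_subset_stripCl (x0 : ℝ) {y0 : ℝ} (hy0 : 0 ≤ y0) :
    segment ℝ 0 (ptC x0 y0) ⊆ stripCl y0 := by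
  rw [segment_eq_image]
  rintro _ ⟨t, ⟨ht0, ht1⟩, rfl⟩
  simp only [stripCl, smul_zero, zero_add, Set.mem_ofPred_eq, PiLp.smul_apply, smul_eq_mul,
    ptC_apply_one]
  constructor <;> nlinarith

theorem openSegment_zero_ptC_subset_strip_diff (x0 : ℝ) {y0 : ℝ} (hy0 : 0 < y0) :
    openSegment ℝ 0 (ptC x0 y0) ⊆ strip y0 \ {ptC x0 y0} := by
  rw [openSegment_eq_image]
  rintro _ ⟨t, ⟨ht0, ht1⟩, rfl⟩
  have hsnd : ((1 - t) • (0 : E2) + t • ptC x0 y0) 1 = t * (y0 / 2) := by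
    simp [ptC_apply_one]
  refine ⟨⟨?_, ?_⟩, fun h => ?_⟩
  · simp only [hsnd]; positivity
  · simp only [hsnd]; nlinarith
  · have := congrArg (· 1) h
    simp only [hsnd, ptC_apply_one] at this
    nlinarith

theorem necessity_far_condition_general (x0 y0 : ℝ)
    (hy0 : 0 < y0) (v : E2 → ℝ)
    (hcont : ContinuousOn v (stripCl y0))
    (hdiff : ∀ p ∈ strip y0 \ {ptC x0 y0},
      DifferentiableAt ℝ v p ∧ ‖gradient v p‖ < 1)
    (h0 : v (pt 0 0) = 0) (hc : v (ptC x0 y0) = 1) :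
    (x0 + 1) ^ 2 + y0 ^ 2 > 4 := by
  have hsub := openSegment_zero_ptC_subset_strip_diff x0 hy0
  have hc_ne : (0 : E2) ≠ ptC x0 y0 := fun h => by
    have := congrArg (· 1) h
    simp only [PiLp.zero_apply, ptC_apply_one] at this
    linarith
  have hlt := sub_lt_mul_norm_of_norm_fderiv_lt hc_ne
    (hcont.mono (segment_zero_ptC_subset_stripCl x0 hy0.le))
    (fun p hp => (hdiff p (hsub hp)).1)
    (fun p hp => norm_gradient_eq_norm_fderiv v p ▸ (hdiff p (hsub hp)).2)
  rw [hc, (pt_zero_zero ▸ h0 : v 0 = 0), sub_zero, one_mul, sub_zero] at hlt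
  have hnorm := norm_pt_sq ((x0 + 1) / 2) (y0 / 2)
  rw [← ptC] at hnorm
  nlinarith

/-- Necessity of the condition `(x0+1)² + y0² > 4` for the punctured Dirichlet problem:
if a continuous function on the closed strip is differentiable with gradient of norm
less than `1` away from the puncture `c`, vanishes at the origin and equals `1` at `c`,
then `c` is at distance greater than `1` from the origin. -/
theorem necessity_far_condition (x0 y0 : ℝ) (hx0 : x0 ∈ Set.Icc (-1 : ℝ) 1)
    (hy0 : 0 < y0) (v : E2 → ℝ)
    (hcont : ContinuousOn v (stripCl y0))
    (hdiff : ∀ p ∈ strip y0 \ {ptC x0 y0},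
      DifferentiableAt ℝ v p ∧ ‖gradient v p‖ < 1)
    (h0 : v (pt 0 0) = 0) (hc : v (ptC x0 y0) = 1) :
    (x0 + 1) ^ 2 + y0 ^ 2 > 4 :=
  necessity_far_condition_general x0 y0 hy0 v hcont hdiff h0 hc
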